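/- arXiv:2203.12464 — 4 statements merged into one kernel-verified Lean document; each statement's English description precedes it below -/
import Mathlib

section
/- Let θ > 0, let F₀ be a continuous distribution function on [0,∞), and set F = F₀^θ. Let X₁, X₂, Y₁, Y₂ be independent random variables with X₁, X₂ distributed according to F₀ and Y₁, Y₂ distributed according to F. Then P(X₁ < Y₁, Y₂ < X₂ < Y₁) = P(Y₁ < X₁, X₂ < Y₂ < X₁); that is, the measure of departure Δ(F,F₀) = P(X₁ < Y₁, Y₂ < X₂ < Y₁) − P(Y₁ < X₁, X₂ < Y₂ < X₁) vanishes under the proportional reversed hazard rate null hypothesis. -/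
open MeasureTheory ProbabilityTheory
open Set Filter
open scoped ENNReal

/-!
In the family `F ^ a` of reversed-hazard-proportional laws, independent `W₁, W₂ ~ F ^ a` and
`Z₁, Z₂ ~ F ^ b` satisfy `P(Z₁ < W₁, W₂ < Z₂ < W₁) = a b / (2 (a + b) ^ 2)`, which is symmetric
in `a` and `b`; the two probabilities in `Δ` are this quantity for `(a, b) = (θ, 1)` and
`(1, θ)`. To compute it, condition on `W₁` and then on `Z₂`: every integral that appears is a
power of a continuous cdf `G` integrated against its own law, and the law of `G(X)` is uniform on
`(0, 1]`, so `∫_{x < y} G(x) ^ q dG(x) = G(y) ^ (q + 1) / (q + 1)`.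
-/

section ContinuousCdf

variable {ν : Measure ℝ} [IsProbabilityMeasure ν]

lemma measure_cdf_preimage_Iic (hc : Continuous (cdf ν)) {t : ℝ} (ht₀ : 0 ≤ t) (ht₁ : t < 1) :
    ν (cdf ν ⁻¹' Iic t) = ENNReal.ofReal t := by
  set S := cdf ν ⁻¹' Iic t
  -- `S` is a closed lower set: empty (only when `t = 0`) or `Iic (sSup S)`, and by continuity
  -- of the cdf from the right, `cdf ν (sSup S) = t`.
  rcases S.eq_empty_or_nonempty with hS | hS
  · have : t ≤ 0 := ge_of_tendsto' (tendsto_cdf_atBot ν) fun x =>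
      (not_le.1 fun hx => hS.subset (show x ∈ S from hx)).le
    rw [hS, measure_empty, le_antisymm this ht₀, ENNReal.ofReal_zero]
  obtain ⟨x₀, hx₀⟩ := eventually_atTop.1 ((tendsto_cdf_atTop ν).eventually (lt_mem_nhds ht₁))
  have hbdd : BddAbove S := ⟨x₀, fun x hx => not_lt.1 fun h => (hx₀ x h.le).not_ge hx⟩
  have hcS : sSup S ∈ S := (isClosed_Iic.preimage hc).csSup_mem hS hbdd
  have hS_eq : S = Iic (sSup S) :=
    Subset.antisymm (fun x hx => le_csSup hbdd hx)
      fun x hx => (monotone_cdf ν hx).trans hcS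
  have hcdf : cdf ν (sSup S) = t := by
    refine le_antisymm hcS (ge_of_tendsto (hc.continuousWithinAt (s := Ioi (sSup S)))
      (eventually_nhdsWithin_of_forall fun x hx => ?_))
    exact (not_le.1 fun h : x ∈ S => (not_le.2 hx) (le_csSup hbdd h)).le
  rw [hS_eq, ← ofReal_cdf, hcdf]

lemma map_cdf_eq_restrict_Ioc (hc : Continuous (cdf ν)) :
    ν.map (cdf ν) = volume.restrict (Ioc 0 1) := by
  have : IsProbabilityMeasure (ν.map (cdf ν)) := Measure.isProbabilityMeasure_map hc.aemeasurable
  refine Measure.ext_of_Iic _ _ fun t => ?_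
  rw [Measure.map_apply hc.measurable measurableSet_Iic, Measure.restrict_apply measurableSet_Iic]
  rcases lt_or_ge t 0 with ht₀ | ht₀
  · have h₁ : cdf ν ⁻¹' Iic t = ∅ :=
      eq_empty_of_forall_notMem fun x hx => (ht₀.trans_le (cdf_nonneg ν x)).not_ge hx
    have h₂ : Iic t ∩ Ioc 0 1 = ∅ :=
      eq_empty_of_forall_notMem fun x hx => (hx.1.trans_lt ht₀).not_gt hx.2.1
    simp [h₁, h₂]
  rcases lt_or_ge t 1 with ht₁ | ht₁
  · rw [measure_cdf_preimage_Iic hc ht₀ ht₁, Iic_inter_Ioc_of_le ht₁.le, Real.volume_Ioc,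
      sub_zero]
  · have h₁ : cdf ν ⁻¹' Iic t = univ := eq_univ_of_forall fun x => (cdf_le_one ν x).trans ht₁
    rw [h₁, inter_eq_right.2 fun x hx => hx.2.trans ht₁]
    simp

lemma measure_cdf_preimage_singleton (hc : Continuous (cdf ν)) (u : ℝ) :
    ν (cdf ν ⁻¹' {u}) = 0 := by
  rw [← Measure.map_apply hc.measurable (measurableSet_singleton u), map_cdf_eq_restrict_Ioc hc]
  exact measure_singleton u

lemma measure_Iio_eq_ofReal_cdf (hc : Continuous (cdf ν)) (x : ℝ) :
    ν (Iio x) = ENNReal.ofReal (cdf ν x) := by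
  have hx : ν {x} = 0 := measure_mono_null (fun y hy => by rw [mem_singleton_iff.1 hy]; rfl)
    (measure_cdf_preimage_singleton hc (cdf ν x))
  rw [measure_congr (Iio_ae_eq_Iic' hx), ofReal_cdf]

lemma lintegral_comp_cdf (hc : Continuous (cdf ν)) {φ : ℝ → ℝ≥0∞} (hφ : Measurable φ) :
    ∫⁻ x, φ (cdf ν x) ∂ν = ∫⁻ u in Ioc 0 1, φ u := by
  rw [← lintegral_map hφ hc.measurable, map_cdf_eq_restrict_Ioc hc]

lemma setLIntegral_Iio_comp_cdf (hc : Continuous (cdf ν)) {φ : ℝ → ℝ≥0∞} (hφ : Measurable φ)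
    (y : ℝ) : ∫⁻ x in Iio y, φ (cdf ν x) ∂ν = ∫⁻ u in Ioc 0 (cdf ν y), φ u := by
  have hae : Iio y =ᵐ[ν] cdf ν ⁻¹' Iic (cdf ν y) := by
    refine ae_eq_set.2 ⟨?_, measure_mono_null (fun x hx => ?_)
      (measure_cdf_preimage_singleton hc (cdf ν y))⟩
    · exact measure_mono_null (fun x hx => hx.2 (monotone_cdf ν (le_of_lt hx.1)))
        measure_empty
    · exact le_antisymm hx.1 (monotone_cdf ν (not_lt.1 hx.2))
  rw [Measure.restrict_congr_set hae,
    ← setLIntegral_map measurableSet_Iic hφ hc.measurable, map_cdf_eq_restrict_Ioc hc,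
    Measure.restrict_restrict measurableSet_Iic, Iic_inter_Ioc_of_le (cdf_le_one ν y)]

end ContinuousCdf

lemma lintegral_Ioc_rpow {q : ℝ} (hq : -1 < q) {U : ℝ} (hU : 0 ≤ U) :
    ∫⁻ t in Ioc 0 U, ENNReal.ofReal (t ^ q) = ENNReal.ofReal (U ^ (q + 1) / (q + 1)) := by
  have hint : IntegrableOn (fun t : ℝ => t ^ q) (Ioc 0 U) :=
    (intervalIntegral.intervalIntegrable_rpow' hq).1
  have hnn : 0 ≤ᵐ[volume.restrict (Ioc 0 U)] fun t : ℝ => t ^ q :=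
    ae_restrict_of_forall_mem measurableSet_Ioc fun t ht => Real.rpow_nonneg ht.1.le q
  rw [← ofReal_integral_eq_lintegral_ofReal hint hnn, ← intervalIntegral.integral_of_le hU,
    integral_rpow (Or.inl hq), Real.zero_rpow (by linarith), sub_zero]

-- For `p = (w₁, z₁, z₂, w₂)`: `z₁ < w₁` and `w₂ < z₂ < w₁`.
def departureEvent : Set (ℝ × ℝ × ℝ × ℝ) :=
  {p | p.2.1 < p.1 ∧ p.2.2.2 < p.2.2.1 ∧ p.2.2.1 < p.1}

lemma measurableSet_departureEvent : MeasurableSet departureEvent := by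
  unfold departureEvent
  measurability

section PowerFamily

variable {F : ℝ → ℝ} {a b : ℝ}

lemma continuous_cdf_of_cdf_eq_rpow (hF : Continuous F) (hb : 0 < b) {μ : Measure ℝ}
    (hμ : ∀ x, cdf μ x = F x ^ b) : Continuous (cdf μ) := by
  simpa only [← funext hμ] using hF.rpow_const fun _ => Or.inr hb.le

lemma rpow_eq_cdf_rpow_div (hF₀ : ∀ x, 0 ≤ F x) (hb : 0 < b) {μ : Measure ℝ}
    (hμ : ∀ x, cdf μ x = F x ^ b) (c x : ℝ) : F x ^ c = cdf μ x ^ (c / b) := by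
  rw [hμ, ← Real.rpow_mul (hF₀ x), mul_div_cancel₀ _ hb.ne']

lemma setLIntegral_Iio_rpow_of_cdf_eq_rpow (hF : Continuous F) (hF₀ : ∀ x, 0 ≤ F x)
    (hb : 0 < b) {μ : Measure ℝ} [IsProbabilityMeasure μ] (hμ : ∀ x, cdf μ x = F x ^ b)
    {c : ℝ} (hbc : 0 < b + c) (y : ℝ) :
    ∫⁻ x in Iio y, ENNReal.ofReal (F x ^ c) ∂μ = ENNReal.ofReal (b / (b + c) * F y ^ (b + c)) := by
  have hq : -1 < c / b := by rw [lt_div_iff₀ hb]; linarith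
  have hexp : c / b + 1 = (b + c) / b := by field_simp; ring
  simp_rw [rpow_eq_cdf_rpow_div hF₀ hb hμ c]
  rw [setLIntegral_Iio_comp_cdf (continuous_cdf_of_cdf_eq_rpow hF hb hμ)
      (φ := fun u => ENNReal.ofReal (u ^ (c / b))) (by fun_prop) y,
    lintegral_Ioc_rpow hq (cdf_nonneg μ y), hμ, ← Real.rpow_mul (hF₀ y), hexp,
    mul_div_cancel₀ _ hb.ne', div_div_eq_mul_div]
  ring_nf

lemma lintegral_rpow_of_cdf_eq_rpow (hF : Continuous F) (hF₀ : ∀ x, 0 ≤ F x)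
    (hb : 0 < b) {μ : Measure ℝ} [IsProbabilityMeasure μ] (hμ : ∀ x, cdf μ x = F x ^ b)
    {c : ℝ} (hbc : 0 < b + c) :
    ∫⁻ x, ENNReal.ofReal (F x ^ c) ∂μ = ENNReal.ofReal (b / (b + c)) := by
  have hq : -1 < c / b := by rw [lt_div_iff₀ hb]; linarith
  have hexp : c / b + 1 = (b + c) / b := by field_simp; ring
  simp_rw [rpow_eq_cdf_rpow_div hF₀ hb hμ c]
  rw [lintegral_comp_cdf (continuous_cdf_of_cdf_eq_rpow hF hb hμ)
      (φ := fun u => ENNReal.ofReal (u ^ (c / b))) (by fun_prop),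
    lintegral_Ioc_rpow hq zero_le_one, Real.one_rpow, hexp, one_div_div]

lemma prod_lt_lt_of_cdf_eq_rpow (hF : Continuous F) (hF₀ : ∀ x, 0 ≤ F x) (ha : 0 < a)
    (hb : 0 < b) {μ ν : Measure ℝ} [IsProbabilityMeasure μ] [IsProbabilityMeasure ν]
    (hμ : ∀ x, cdf μ x = F x ^ b) (hν : ∀ x, cdf ν x = F x ^ a) (y : ℝ) :
    (μ.prod ν) {w | w.2 < w.1 ∧ w.1 < y} = ENNReal.ofReal (b / (b + a) * F y ^ (b + a)) := by
  have hsection : ∀ x, ν (Prod.mk x ⁻¹' {w : ℝ × ℝ | w.2 < w.1 ∧ w.1 < y}) =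
      (Iio y).indicator (fun x => ENNReal.ofReal (F x ^ a)) x := fun x => by
    by_cases hxy : x < y
    · have hpre : Prod.mk x ⁻¹' {w : ℝ × ℝ | w.2 < w.1 ∧ w.1 < y} = Iio x := by ext; simp [hxy]
      rw [hpre, indicator_of_mem (mem_Iio.2 hxy),
        measure_Iio_eq_ofReal_cdf (continuous_cdf_of_cdf_eq_rpow hF ha hν), hν]
    · simp [hxy]
  rw [Measure.prod_apply (by measurability), lintegral_congr hsection,
    lintegral_indicator measurableSet_Iio,
    setLIntegral_Iio_rpow_of_cdf_eq_rpow hF hF₀ hb hμ (by linarith)]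

lemma prod_departureEvent_of_cdf_eq_rpow (hF : Continuous F) (hF₀ : ∀ x, 0 ≤ F x)
    (ha : 0 < a) (hb : 0 < b) {ν₁ μ₁ μ₂ ν₂ : Measure ℝ} [IsProbabilityMeasure ν₁]
    [IsProbabilityMeasure μ₁] [IsProbabilityMeasure μ₂] [IsProbabilityMeasure ν₂]
    (hν₁ : ∀ x, cdf ν₁ x = F x ^ a) (hμ₁ : ∀ x, cdf μ₁ x = F x ^ b)
    (hμ₂ : ∀ x, cdf μ₂ x = F x ^ b) (hν₂ : ∀ x, cdf ν₂ x = F x ^ a) :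
    (ν₁.prod (μ₁.prod (μ₂.prod ν₂))) departureEvent =
      ENNReal.ofReal (a * b / (2 * (a + b) ^ 2)) := by
  have hsection : ∀ y, (μ₁.prod (μ₂.prod ν₂)) (Prod.mk y ⁻¹' departureEvent) =
      ENNReal.ofReal (b / (b + a)) * ENNReal.ofReal (F y ^ (a + 2 * b)) := fun y => by
    have hpre : Prod.mk y ⁻¹' departureEvent = Iio y ×ˢ {w : ℝ × ℝ | w.2 < w.1 ∧ w.1 < y} := by
      ext; simp [departureEvent]
    rw [hpre, Measure.prod_prod,
      measure_Iio_eq_ofReal_cdf (continuous_cdf_of_cdf_eq_rpow hF hb hμ₁), hμ₁,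
      prod_lt_lt_of_cdf_eq_rpow hF hF₀ ha hb hμ₂ hν₂,
      ← ENNReal.ofReal_mul (Real.rpow_nonneg (hF₀ y) b), ← ENNReal.ofReal_mul (by positivity),
      mul_left_comm, ← Real.rpow_add' (hF₀ y) (by linarith)]
    ring_nf
  rw [Measure.prod_apply measurableSet_departureEvent, lintegral_congr hsection,
    lintegral_const_mul' _ _ ENNReal.ofReal_ne_top,
    lintegral_rpow_of_cdf_eq_rpow hF hF₀ ha hν₁ (by linarith),
    ← ENNReal.ofReal_mul (by positivity)]
  congr 1
  field_simp
  ring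

end PowerFamily

section Laws

variable {Ω : Type*} [MeasurableSpace Ω] {μ : Measure Ω}

lemma cdf_map_eq_toReal [IsProbabilityMeasure μ] {Z : Ω → ℝ} (hZ : Measurable Z) (x : ℝ) :
    cdf (μ.map Z) x = (μ {ω | Z ω ≤ x}).toReal := by
  have := Measure.isProbabilityMeasure_map (μ := μ) hZ.aemeasurable
  rw [cdf_eq_real, measureReal_def, Measure.map_apply hZ measurableSet_Iic]
  rfl

variable {ι : Type*} {β : ι → Type*} [∀ i, MeasurableSpace (β i)] {f : ∀ i, Ω → β i}

lemma ProbabilityTheory.iIndepFun.map_prodMk₄ (h : iIndepFun f μ) (hf : ∀ i, Measurable (f i))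
    {i j k l : ι} (hij : i ≠ j) (hik : i ≠ k) (hil : i ≠ l) (hjk : j ≠ k) (hjl : j ≠ l)
    (hkl : k ≠ l) :
    μ.map (fun ω => (f i ω, f j ω, f k ω, f l ω)) =
      (μ.map (f i)).prod ((μ.map (f j)).prod ((μ.map (f k)).prod (μ.map (f l)))) := by
  have := h.isProbabilityMeasure
  have hpairs : μ.map (fun ω => ((f i ω, f j ω), (f k ω, f l ω))) =
      ((μ.map (f i)).prod (μ.map (f j))).prod ((μ.map (f k)).prod (μ.map (f l))) := by
    rw [(indepFun_iff_map_prod_eq_prod_map_map (by fun_prop) (by fun_prop)).1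
        (h.indepFun_prodMk_prodMk hf i j k l hik hil hjk hjl),
      (indepFun_iff_map_prod_eq_prod_map_map (by fun_prop) (by fun_prop)).1 (h.indepFun hij),
      (indepFun_iff_map_prod_eq_prod_map_map (by fun_prop) (by fun_prop)).1 (h.indepFun hkl)]
  rw [← Measure.prodAssoc_prod, ← hpairs, Measure.map_map (by fun_prop) (by fun_prop)]
  rfl

lemma ProbabilityTheory.iIndepFun.measure_preimage_prodMk₄ (h : iIndepFun f μ)
    (hf : ∀ i, Measurable (f i)) {i j k l : ι} {s : Set (β i × β j × β k × β l)}
    (hs : MeasurableSet s) (hij : i ≠ j) (hik : i ≠ k) (hil : i ≠ l) (hjk : j ≠ k)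
    (hjl : j ≠ l) (hkl : k ≠ l) :
    μ ((fun ω => (f i ω, f j ω, f k ω, f l ω)) ⁻¹' s) =
      ((μ.map (f i)).prod ((μ.map (f j)).prod ((μ.map (f k)).prod (μ.map (f l))))) s := by
  rw [← h.map_prodMk₄ hf hij hik hil hjk hjl hkl, Measure.map_apply (by fun_prop) hs]

end Laws

theorem departure_vanishes_under_null_general
    {Ω : Type*} [MeasureSpace Ω] [IsProbabilityMeasure (ℙ : Measure Ω)]
    (θ : ℝ) (hθ : 0 < θ)
    (X₁ X₂ Y₁ Y₂ : Ω → ℝ) (F₀ : ℝ → ℝ)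
    (hX₁m : Measurable X₁) (hX₂m : Measurable X₂)
    (hY₁m : Measurable Y₁) (hY₂m : Measurable Y₂)
    (hF₀cont : Continuous F₀)
    (hindep : iIndepFun ![X₁, X₂, Y₁, Y₂] ℙ)
    (hX₁cdf : ∀ x, (ℙ {ω | X₁ ω ≤ x}).toReal = F₀ x)
    (hX₂cdf : ∀ x, (ℙ {ω | X₂ ω ≤ x}).toReal = F₀ x)
    (hY₁cdf : ∀ x, (ℙ {ω | Y₁ ω ≤ x}).toReal = F₀ x ^ θ)
    (hY₂cdf : ∀ x, (ℙ {ω | Y₂ ω ≤ x}).toReal = F₀ x ^ θ) :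
    ℙ {ω | X₁ ω < Y₁ ω ∧ Y₂ ω < X₂ ω ∧ X₂ ω < Y₁ ω} =
      ℙ {ω | Y₁ ω < X₁ ω ∧ X₂ ω < Y₂ ω ∧ Y₂ ω < X₁ ω} := by
  have hF₀nn : ∀ x, 0 ≤ F₀ x := fun x => hX₁cdf x ▸ ENNReal.toReal_nonneg
  have hm : ∀ i, Measurable (![X₁, X₂, Y₁, Y₂] i) := fun i => by fin_cases i <;> assumption
  have law : ∀ {Z : Ω → ℝ} {c : ℝ}, Measurable Z →
      (∀ x, (ℙ {ω | Z ω ≤ x}).toReal = F₀ x ^ c) → ∀ x, cdf (Measure.map Z ℙ) x = F₀ x ^ c :=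
    fun hZ hZcdf x => (cdf_map_eq_toReal hZ x).trans (hZcdf x)
  have := Measure.isProbabilityMeasure_map (μ := ℙ) hX₁m.aemeasurable
  have := Measure.isProbabilityMeasure_map (μ := ℙ) hX₂m.aemeasurable
  have := Measure.isProbabilityMeasure_map (μ := ℙ) hY₁m.aemeasurable
  have := Measure.isProbabilityMeasure_map (μ := ℙ) hY₂m.aemeasurable
  have cX₁ := law hX₁m (c := 1) (by simpa using hX₁cdf)
  have cX₂ := law hX₂m (c := 1) (by simpa using hX₂cdf)
  calc _ = ((Measure.map Y₁ ℙ).prod ((Measure.map X₁ ℙ).prod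
          ((Measure.map X₂ ℙ).prod (Measure.map Y₂ ℙ)))) departureEvent :=
        hindep.measure_preimage_prodMk₄ hm measurableSet_departureEvent (i := 2) (j := 0) (k := 1)
          (l := 3) (by decide) (by decide) (by decide) (by decide) (by decide) (by decide)
    _ = ENNReal.ofReal (θ * 1 / (2 * (θ + 1) ^ 2)) :=
        prod_departureEvent_of_cdf_eq_rpow hF₀cont hF₀nn hθ one_pos
          (law hY₁m hY₁cdf) cX₁ cX₂ (law hY₂m hY₂cdf)
    _ = ENNReal.ofReal (1 * θ / (2 * (1 + θ) ^ 2)) := by ring_nf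
    _ = ((Measure.map X₁ ℙ).prod ((Measure.map Y₁ ℙ).prod
          ((Measure.map Y₂ ℙ).prod (Measure.map X₂ ℙ)))) departureEvent :=
        (prod_departureEvent_of_cdf_eq_rpow hF₀cont hF₀nn one_pos hθ
          cX₁ (law hY₁m hY₁cdf) (law hY₂m hY₂cdf) cX₂).symm
    _ = _ :=
        (hindep.measure_preimage_prodMk₄ hm measurableSet_departureEvent (i := 0) (j := 2) (k := 3)
          (l := 1) (by decide) (by decide) (by decide) (by decide) (by decide) (by decide)).symm

/-- Under the proportional reversed hazard rate null hypothesis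
`F = F₀ ^ θ` (with `F₀` a continuous distribution function on `[0,∞)`), for independent
`X₁, X₂ ~ F₀` and `Y₁, Y₂ ~ F` we have
`P(X₁ < Y₁, Y₂ < X₂ < Y₁) = P(Y₁ < X₁, X₂ < Y₂ < X₁)`, i.e. the measure of
departure `Δ(F,F₀)` vanishes. -/
theorem departure_vanishes_under_null
    {Ω : Type*} [MeasureSpace Ω] [IsProbabilityMeasure (ℙ : Measure Ω)]
    (θ : ℝ) (hθ : 0 < θ)
    (X₁ X₂ Y₁ Y₂ : Ω → ℝ) (F₀ : ℝ → ℝ)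
    (hX₁m : Measurable X₁) (hX₂m : Measurable X₂)
    (hY₁m : Measurable Y₁) (hY₂m : Measurable Y₂)
    (hF₀cont : Continuous F₀)
    (hX₁nn : ∀ ω, 0 ≤ X₁ ω) (hX₂nn : ∀ ω, 0 ≤ X₂ ω)
    (hY₁nn : ∀ ω, 0 ≤ Y₁ ω) (hY₂nn : ∀ ω, 0 ≤ Y₂ ω)
    (hindep : iIndepFun ![X₁, X₂, Y₁, Y₂] ℙ)
    (hX₁cdf : ∀ x, (ℙ {ω | X₁ ω ≤ x}).toReal = F₀ x)
    (hX₂cdf : ∀ x, (ℙ {ω | X₂ ω ≤ x}).toReal = F₀ x)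
    (hY₁cdf : ∀ x, (ℙ {ω | Y₁ ω ≤ x}).toReal = F₀ x ^ θ)
    (hY₂cdf : ∀ x, (ℙ {ω | Y₂ ω ≤ x}).toReal = F₀ x ^ θ) :
    ℙ {ω | X₁ ω < Y₁ ω ∧ Y₂ ω < X₂ ω ∧ X₂ ω < Y₁ ω} =
      ℙ {ω | Y₁ ω < X₁ ω ∧ X₂ ω < Y₂ ω ∧ Y₂ ω < X₁ ω} :=
  departure_vanishes_under_null_general θ hθ X₁ X₂ Y₁ Y₂ F₀ hX₁m hX₂m hY₁m hY₂m hF₀cont hindep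
    hX₁cdf hX₂cdf hY₁cdf hY₂cdf
end

section
/- Let F, F₀ be distribution functions on [0,∞) with continuous densities f, f₀ that are positive on (0,∞), and suppose the ratio of reversed hazard rates x ↦ (f(x)F₀(x))/(F(x)f₀(x)) is monotone increasing on (0,∞). Then Δ(F,F₀) = ∬_{0<x₁<x₂} [F(x₁)f(x₂)F₀(x₂)f₀(x₁) − F(x₂)f(x₁)F₀(x₁)f₀(x₂)] dx₁ dx₂ ≥ 0; moreover, if the ratio is strictly increasing on some nonempty open subinterval of (0,∞), then Δ(F,F₀) > 0. -/
/-!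
Writing `r = (f F₀) / (F f₀)` for the ratio of reversed hazard rates, the integrand factors on the
region `0 < x₁ < x₂` as `F(x₁) f₀(x₁) · F(x₂) f₀(x₂) · (r(x₂) - r(x₁))`, a product of positive
factors with a difference that is nonnegative when `r` is monotone. Hence `Δ ≥ 0`; if `r` is
strictly increasing on `(a, b)`, the integrand is strictly positive on an open rectangle
`(a, m) × (m, b)` with `a < m < b`, which has positive Lebesgue measure, so `Δ > 0`.
-/

open MeasureTheory Set

theorem setIntegral_pos_of_pos_on_isOpen {X : Type*} [TopologicalSpace X] [MeasurableSpace X]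
    {μ : Measure X} [μ.IsOpenPosMeasure] {g : X → ℝ} {s U : Set X} (hs : MeasurableSet s)
    (hgs : IntegrableOn g s μ) (hg : ∀ x ∈ s, 0 ≤ g x) (hU : IsOpen U) (hUne : U.Nonempty)
    (hUs : U ⊆ s) (hgU : ∀ x ∈ U, 0 < g x) : 0 < ∫ x in s, g x ∂μ := by
  rw [setIntegral_pos_iff_support_of_nonneg_ae (ae_restrict_of_forall_mem hs hg) hgs]
  exact (hU.measure_pos μ hUne).trans_le (measure_mono fun x hx => ⟨(hgU x hx).ne', hUs hx⟩)

section DistributionFunction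

variable {f F : ℝ → ℝ}

theorem nonneg_of_pos_of_eq_zero (hpos : ∀ x > (0 : ℝ), 0 < f x)
    (hzero : ∀ x ≤ (0 : ℝ), f x = 0) (x : ℝ) : 0 ≤ f x :=
  (le_or_gt x 0).elim (fun hx => (hzero x hx).ge) fun hx => (hpos x hx).le

theorem monotone_of_eq_setIntegral_Iic (hf : ∀ x, 0 ≤ f x) (hfi : Integrable f)
    (hF : ∀ x, F x = ∫ t in Iic x, f t) : Monotone F := fun x y hxy => by
  rw [hF x, hF y]
  exact setIntegral_mono_set hfi.integrableOn (ae_of_all _ hf)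
    (Iic_subset_Iic.2 hxy).eventuallyLE

theorem norm_le_integral_norm_of_eq_setIntegral_Iic (hfi : Integrable f)
    (hF : ∀ x, F x = ∫ t in Iic x, f t) (x : ℝ) : ‖F x‖ ≤ ∫ t, ‖f t‖ := by
  rw [hF x]
  exact (norm_integral_le_integral_norm f).trans
    (setIntegral_le_integral hfi.norm (ae_of_all _ fun t => norm_nonneg (f t)))

theorem pos_of_eq_setIntegral_Iic (hf : ∀ x, 0 ≤ f x) (hfi : Integrable f)
    (hpos : ∀ x > (0 : ℝ), 0 < f x) (hF : ∀ x, F x = ∫ t in Iic x, f t) {x : ℝ} (hx : 0 < x) :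
    0 < F x := by
  rw [hF x]
  exact setIntegral_pos_of_pos_on_isOpen measurableSet_Iic hfi.integrableOn (fun t _ => hf t)
    isOpen_Ioo (nonempty_Ioo.2 hx) (fun t ht => ht.2.le) fun t ht => hpos t ht.1

end DistributionFunction

section Departure

variable (F F₀ f f₀ : ℝ → ℝ)

/-- The ratio `r_F / r_{F₀}` of the reversed hazard rates `r_G = g / G`. -/
noncomputable def reversedHazardRateRatio (x : ℝ) : ℝ :=
  f x * F₀ x / (F x * f₀ x)

noncomputable def departureIntegrand (p : ℝ × ℝ) : ℝ :=
  F p.1 * f p.2 * F₀ p.2 * f₀ p.1 - F p.2 * f p.1 * F₀ p.1 * f₀ p.2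

variable {F F₀ f f₀}

theorem departureIntegrand_eq {x₁ x₂ : ℝ} (h₁ : F x₁ * f₀ x₁ ≠ 0) (h₂ : F x₂ * f₀ x₂ ≠ 0) :
    departureIntegrand F F₀ f f₀ (x₁, x₂) = F x₁ * f₀ x₁ * (F x₂ * f₀ x₂) *
      (reversedHazardRateRatio F F₀ f f₀ x₂ - reversedHazardRateRatio F F₀ f f₀ x₁) := by
  obtain ⟨hF₁, hf₀₁⟩ := mul_ne_zero_iff.1 h₁
  obtain ⟨hF₂, hf₀₂⟩ := mul_ne_zero_iff.1 h₂
  simp only [departureIntegrand, reversedHazardRateRatio]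
  field_simp

theorem departureIntegrand_nonneg {x₁ x₂ : ℝ} (h₁ : 0 < F x₁ * f₀ x₁) (h₂ : 0 < F x₂ * f₀ x₂)
    (h : reversedHazardRateRatio F F₀ f f₀ x₁ ≤ reversedHazardRateRatio F F₀ f f₀ x₂) :
    0 ≤ departureIntegrand F F₀ f f₀ (x₁, x₂) := by
  rw [departureIntegrand_eq h₁.ne' h₂.ne']
  exact mul_nonneg (mul_pos h₁ h₂).le (sub_nonneg.2 h)

theorem departureIntegrand_pos {x₁ x₂ : ℝ} (h₁ : 0 < F x₁ * f₀ x₁) (h₂ : 0 < F x₂ * f₀ x₂)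
    (h : reversedHazardRateRatio F F₀ f f₀ x₁ < reversedHazardRateRatio F F₀ f f₀ x₂) :
    0 < departureIntegrand F F₀ f f₀ (x₁, x₂) := by
  rw [departureIntegrand_eq h₁.ne' h₂.ne']
  exact mul_pos (mul_pos h₁ h₂) (sub_pos.2 h)

theorem integrable_departureIntegrand {C C₀ : ℝ} (hf : Integrable f) (hf₀ : Integrable f₀)
    (hF : Measurable F) (hF₀ : Measurable F₀) (hFC : ∀ x, ‖F x‖ ≤ C)
    (hF₀C : ∀ x, ‖F₀ x‖ ≤ C₀) : Integrable (departureIntegrand F F₀ f f₀) := by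
  have hbound : ∀ x y, ‖F x * F₀ y‖ ≤ C * C₀ := fun x y => by
    rw [norm_mul]
    exact mul_le_mul (hFC x) (hF₀C y) (norm_nonneg _) ((norm_nonneg _).trans (hFC x))
  have h₁ : Integrable fun p : ℝ × ℝ => F p.1 * F₀ p.2 * (f₀ p.1 * f p.2) := by
    refine Integrable.bdd_mul (c := C * C₀) ?_ ?_ (ae_of_all _ fun p => hbound p.1 p.2)
    · rw [Measure.volume_eq_prod]; exact hf₀.mul_prod hf
    · exact ((hF.comp measurable_fst).mul (hF₀.comp measurable_snd)).aestronglyMeasurable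
  have h₂ : Integrable fun p : ℝ × ℝ => F p.2 * F₀ p.1 * (f p.1 * f₀ p.2) := by
    refine Integrable.bdd_mul (c := C * C₀) ?_ ?_ (ae_of_all _ fun p => hbound p.2 p.1)
    · rw [Measure.volume_eq_prod]; exact hf.mul_prod hf₀
    · exact ((hF.comp measurable_snd).mul (hF₀.comp measurable_fst)).aestronglyMeasurable
  refine (h₁.sub h₂).congr (ae_of_all _ fun p => ?_)
  simp only [departureIntegrand, Pi.sub_apply]
  ring

end Departure

theorem departure_nonneg_of_increasing_ratio_general (F F₀ f f₀ : ℝ → ℝ)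
    (hfpos : ∀ x > (0 : ℝ), 0 < f x) (hf₀pos : ∀ x > (0 : ℝ), 0 < f₀ x)
    (hfzero : ∀ x ≤ (0 : ℝ), f x = 0) (hf₀zero : ∀ x ≤ (0 : ℝ), f₀ x = 0)
    (hfint : ∫ t, f t = 1) (hf₀int : ∫ t, f₀ t = 1)
    (hF : ∀ x, F x = ∫ t in Set.Iic x, f t)
    (hF₀ : ∀ x, F₀ x = ∫ t in Set.Iic x, f₀ t)
    (hmono : MonotoneOn (fun x => f x * F₀ x / (F x * f₀ x)) (Set.Ioi (0 : ℝ))) :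
    0 ≤ ∫ p in {p : ℝ × ℝ | 0 < p.1 ∧ p.1 < p.2},
        (F p.1 * f p.2 * F₀ p.2 * f₀ p.1 - F p.2 * f p.1 * F₀ p.1 * f₀ p.2) ∧
    ((∃ a b : ℝ, 0 ≤ a ∧ a < b ∧
        StrictMonoOn (fun x => f x * F₀ x / (F x * f₀ x)) (Set.Ioo a b)) →
      0 < ∫ p in {p : ℝ × ℝ | 0 < p.1 ∧ p.1 < p.2},
        (F p.1 * f p.2 * F₀ p.2 * f₀ p.1 - F p.2 * f p.1 * F₀ p.1 * f₀ p.2)) := by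
  have hfi : Integrable f := .of_integral_ne_zero (hfint ▸ one_ne_zero)
  have hf₀i : Integrable f₀ := .of_integral_ne_zero (hf₀int ▸ one_ne_zero)
  have hfnn := nonneg_of_pos_of_eq_zero hfpos hfzero
  have hf₀nn := nonneg_of_pos_of_eq_zero hf₀pos hf₀zero
  have hweight {x : ℝ} (hx : 0 < x) : 0 < F x * f₀ x :=
    mul_pos (pos_of_eq_setIntegral_Iic hfnn hfi hfpos hF hx) (hf₀pos x hx)
  have hint : Integrable (departureIntegrand F F₀ f f₀) :=
    integrable_departureIntegrand hfi hf₀i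
      (monotone_of_eq_setIntegral_Iic hfnn hfi hF).measurable
      (monotone_of_eq_setIntegral_Iic hf₀nn hf₀i hF₀).measurable
      (norm_le_integral_norm_of_eq_setIntegral_Iic hfi hF)
      (norm_le_integral_norm_of_eq_setIntegral_Iic hf₀i hF₀)
  have hS : MeasurableSet {p : ℝ × ℝ | 0 < p.1 ∧ p.1 < p.2} :=
    (measurableSet_lt measurable_const measurable_fst).inter
      (measurableSet_lt measurable_fst measurable_snd)
  have hnonneg : ∀ p ∈ {p : ℝ × ℝ | 0 < p.1 ∧ p.1 < p.2}, 0 ≤ departureIntegrand F F₀ f f₀ p :=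
    fun ⟨x₁, x₂⟩ ⟨h₁, h₁₂⟩ => departureIntegrand_nonneg (hweight h₁) (hweight (h₁.trans h₁₂))
      (hmono h₁ (h₁.trans h₁₂) h₁₂.le)
  refine ⟨setIntegral_nonneg hS hnonneg, ?_⟩
  rintro ⟨a, b, ha, hab, hstrict⟩
  obtain ⟨m, ham, hmb⟩ := exists_between hab
  refine setIntegral_pos_of_pos_on_isOpen hS hint.integrableOn hnonneg
    (isOpen_Ioo.prod isOpen_Ioo) ((nonempty_Ioo.2 ham).prod (nonempty_Ioo.2 hmb))
    (fun p ⟨h₁, h₂⟩ => ⟨ha.trans_lt h₁.1, h₁.2.trans h₂.1⟩) fun ⟨x₁, x₂⟩ ⟨h₁, h₂⟩ => ?_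
  exact departureIntegrand_pos (hweight (ha.trans_lt h₁.1))
    (hweight (ha.trans_lt (ham.trans h₂.1)))
    (hstrict ⟨h₁.1, h₁.2.trans hmb⟩ ⟨ham.trans h₂.1, h₂.2⟩ (h₁.2.trans h₂.1))

/-- Let `F, F₀` be distribution functions on `[0,∞)` with continuous
densities `f, f₀` positive on `(0,∞)`, and suppose the ratio of reversed hazard rates
`x ↦ (f x * F₀ x) / (F x * f₀ x)` is monotone increasing on `(0,∞)`. Then
`Δ(F,F₀) = ∬_{0<x₁<x₂} [F(x₁)f(x₂)F₀(x₂)f₀(x₁) − F(x₂)f(x₁)F₀(x₁)f₀(x₂)] ≥ 0`;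
moreover, if the ratio is strictly increasing on some nonempty open subinterval of
`(0,∞)`, then `Δ(F,F₀) > 0`. -/
theorem departure_nonneg_of_increasing_ratio (F F₀ f f₀ : ℝ → ℝ)
    (hfc : Continuous f) (hf₀c : Continuous f₀)
    (hfpos : ∀ x > (0 : ℝ), 0 < f x) (hf₀pos : ∀ x > (0 : ℝ), 0 < f₀ x)
    (hfzero : ∀ x ≤ (0 : ℝ), f x = 0) (hf₀zero : ∀ x ≤ (0 : ℝ), f₀ x = 0)
    (hfint : ∫ t, f t = 1) (hf₀int : ∫ t, f₀ t = 1)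
    (hF : ∀ x, F x = ∫ t in Set.Iic x, f t)
    (hF₀ : ∀ x, F₀ x = ∫ t in Set.Iic x, f₀ t)
    (hmono : MonotoneOn (fun x => f x * F₀ x / (F x * f₀ x)) (Set.Ioi (0 : ℝ))) :
    0 ≤ ∫ p in {p : ℝ × ℝ | 0 < p.1 ∧ p.1 < p.2},
        (F p.1 * f p.2 * F₀ p.2 * f₀ p.1 - F p.2 * f p.1 * F₀ p.1 * f₀ p.2) ∧
    ((∃ a b : ℝ, 0 ≤ a ∧ a < b ∧
        StrictMonoOn (fun x => f x * F₀ x / (F x * f₀ x)) (Set.Ioo a b)) →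
      0 < ∫ p in {p : ℝ × ℝ | 0 < p.1 ∧ p.1 < p.2},
        (F p.1 * f p.2 * F₀ p.2 * f₀ p.1 - F p.2 * f p.1 * F₀ p.1 * f₀ p.2)) :=
  departure_nonneg_of_increasing_ratio_general F F₀ f f₀ hfpos hf₀pos hfzero hf₀zero hfint hf₀int hF
    hF₀ hmono
end

section
/- Let θ > 0, let F₀ be a continuous and strictly increasing distribution function on [0,∞), and set F = F₀^θ. Let X₁, X₂, Y₂ be independent with X₁, X₂ distributed according to F₀ and Y₂ according to F, and let φ be the symmetrized kernel. Then for any y with 0 < F(y) < 1: E[φ(X₁, X₂, y, Y₂)] = (1/2)[θ²/((2+θ)(1+θ)) − F(y)^{1/θ} + (4/(2+θ))·F(y)^{1+2/θ}]. -/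
open MeasureTheory ProbabilityTheory

/-- The kernel `f(x₁,x₂,y₁,y₂) = 1{x₁ < y₁, y₂ < x₂ < y₁} − 1{y₁ < x₁, x₂ < y₂ < x₁}`. -/
noncomputable def prhrKernel (x₁ x₂ y₁ y₂ : ℝ) : ℝ :=
  (if x₁ < y₁ ∧ y₂ < x₂ ∧ x₂ < y₁ then 1 else 0) -
    (if y₁ < x₁ ∧ x₂ < y₂ ∧ y₂ < x₁ then 1 else 0)

/-- The symmetrized kernel `φ`. -/
noncomputable def prhrSymKernel (x₁ x₂ y₁ y₂ : ℝ) : ℝ :=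
  (prhrKernel x₁ x₂ y₁ y₂ + prhrKernel x₂ x₁ y₁ y₂ +
    prhrKernel x₁ x₂ y₂ y₁ + prhrKernel x₂ x₁ y₂ y₁) / 4

/-!
The kernel only compares its arguments, so applying the strictly increasing `F₀` changes nothing:
`φ(X₁, X₂, y, Y₂) = φ(U₁, U₂, q, V^{1/θ})` with `U₁ = F₀(X₁)`, `U₂ = F₀(X₂)`, `V = F(Y₂)`
independent and uniform on `(0,1)` (probability integral transform) and `q = F₀(y) = F(y)^{1/θ}`.
For fixed `y₁, y₂` each indicator in `f(U₁, U₂, y₁, y₂)` is the product of an event on `U₁` and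
one on `U₂`, and averaging over `U₁, U₂` gives `E φ(U₁, U₂, q, w) = max(q, w)² - (q + w)/2`.
With `w = v^{1/θ}` this is `max(F(y), v)^{2/θ} - (q + v^{1/θ})/2`, an elementary integral in `v`.
-/

open Set

section Kernel

theorem prhrKernel_eq_indicator (x₁ x₂ y₁ y₂ : ℝ) :
    prhrKernel x₁ x₂ y₁ y₂ = (Iio y₁ ×ˢ Ioo y₂ y₁).indicator 1 (x₁, x₂) -
      (Ioi (max y₁ y₂) ×ˢ Iio y₂).indicator 1 (x₁, x₂) := by
  simp only [prhrKernel, indicator_apply, mem_prod, mem_Iio, mem_Ioo, mem_Ioi, max_lt_iff,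
    Pi.one_apply]
  congr 2
  exact propext (by tauto)

theorem abs_prhrKernel_le_one (x₁ x₂ y₁ y₂ : ℝ) : |prhrKernel x₁ x₂ y₁ y₂| ≤ 1 := by
  unfold prhrKernel
  split_ifs <;> norm_num

theorem prhrKernel_comp_of_strictMonoOn {s : Set ℝ} {g : ℝ → ℝ} (hg : StrictMonoOn g s)
    {x₁ x₂ y₁ y₂ : ℝ} (h₁ : x₁ ∈ s) (h₂ : x₂ ∈ s) (h₃ : y₁ ∈ s) (h₄ : y₂ ∈ s) :
    prhrKernel (g x₁) (g x₂) (g y₁) (g y₂) = prhrKernel x₁ x₂ y₁ y₂ := by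
  simp only [prhrKernel, hg.lt_iff_lt h₁ h₃, hg.lt_iff_lt h₄ h₂, hg.lt_iff_lt h₂ h₃,
    hg.lt_iff_lt h₃ h₁, hg.lt_iff_lt h₂ h₄, hg.lt_iff_lt h₄ h₁]

theorem prhrSymKernel_comp_of_strictMonoOn {s : Set ℝ} {g : ℝ → ℝ} (hg : StrictMonoOn g s)
    {x₁ x₂ y₁ y₂ : ℝ} (h₁ : x₁ ∈ s) (h₂ : x₂ ∈ s) (h₃ : y₁ ∈ s) (h₄ : y₂ ∈ s) :
    prhrSymKernel (g x₁) (g x₂) (g y₁) (g y₂) = prhrSymKernel x₁ x₂ y₁ y₂ := by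
  simp only [prhrSymKernel, prhrKernel_comp_of_strictMonoOn hg, *]

variable {α : Type*} [MeasurableSpace α] {f₁ f₂ f₃ f₄ : α → ℝ}

theorem Measurable.prhrKernel (h₁ : Measurable f₁) (h₂ : Measurable f₂) (h₃ : Measurable f₃)
    (h₄ : Measurable f₄) : Measurable fun x => prhrKernel (f₁ x) (f₂ x) (f₃ x) (f₄ x) := by
  unfold _root_.prhrKernel
  refine .sub (.ite ?_ measurable_const measurable_const) (.ite ?_ measurable_const measurable_const)
  · exact (measurableSet_lt h₁ h₃).inter
      ((measurableSet_lt h₄ h₂).inter (measurableSet_lt h₂ h₃))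
  · exact (measurableSet_lt h₃ h₁).inter
      ((measurableSet_lt h₂ h₄).inter (measurableSet_lt h₄ h₁))

theorem Measurable.prhrSymKernel (h₁ : Measurable f₁) (h₂ : Measurable f₂) (h₃ : Measurable f₃)
    (h₄ : Measurable f₄) : Measurable fun x => prhrSymKernel (f₁ x) (f₂ x) (f₃ x) (f₄ x) :=
  ((((h₁.prhrKernel h₂ h₃ h₄).add (h₂.prhrKernel h₁ h₃ h₄)).add (h₁.prhrKernel h₂ h₄ h₃)).add
    (h₂.prhrKernel h₁ h₄ h₃)).div_const 4

theorem MeasureTheory.Integrable.prhrKernel {μ : Measure α} [IsFiniteMeasure μ]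
    (h₁ : Measurable f₁) (h₂ : Measurable f₂) (h₃ : Measurable f₃) (h₄ : Measurable f₄) :
    Integrable (fun x => prhrKernel (f₁ x) (f₂ x) (f₃ x) (f₄ x)) μ :=
  .of_bound (h₁.prhrKernel h₂ h₃ h₄).aestronglyMeasurable 1
    (.of_forall fun _ => abs_prhrKernel_le_one _ _ _ _)

theorem MeasureTheory.Integrable.prhrSymKernel {μ : Measure α} [IsFiniteMeasure μ]
    (h₁ : Measurable f₁) (h₂ : Measurable f₂) (h₃ : Measurable f₃) (h₄ : Measurable f₄) :
    Integrable (fun x => prhrSymKernel (f₁ x) (f₂ x) (f₃ x) (f₄ x)) μ :=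
  ((((Integrable.prhrKernel h₁ h₂ h₃ h₄).add (.prhrKernel h₂ h₁ h₃ h₄)).add
    (.prhrKernel h₁ h₂ h₄ h₃)).add (.prhrKernel h₂ h₁ h₄ h₃)).div_const 4

end Kernel

theorem integral_prhrKernel_prod (μ ν : Measure ℝ) [IsFiniteMeasure μ] [IsFiniteMeasure ν]
    (y₁ y₂ : ℝ) :
    ∫ p, prhrKernel p.1 p.2 y₁ y₂ ∂(μ.prod ν) =
      μ.real (Iio y₁) * ν.real (Ioo y₂ y₁) - μ.real (Ioi (max y₁ y₂)) * ν.real (Iio y₂) := by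
  have hA : MeasurableSet (Iio y₁ ×ˢ Ioo y₂ y₁) := measurableSet_Iio.prod measurableSet_Ioo
  have hB : MeasurableSet (Ioi (max y₁ y₂) ×ˢ Iio y₂) := measurableSet_Ioi.prod measurableSet_Iio
  simp only [prhrKernel_eq_indicator, Prod.mk.eta]
  rw [integral_sub ((integrable_const 1).indicator hA) ((integrable_const 1).indicator hB),
    integral_indicator_one hA, integral_indicator_one hB, measureReal_prod_prod,
    measureReal_prod_prod]

noncomputable abbrev unitUniform : Measure ℝ := volume.restrict (Ioo 0 1)

instance : IsProbabilityMeasure unitUniform := ⟨by simp⟩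

theorem unitUniform_real_Ioo {a b : ℝ} (ha : 0 ≤ a) (hb : b ≤ 1) :
    unitUniform.real (Ioo a b) = max (b - a) 0 := by
  rw [measureReal_restrict_apply measurableSet_Ioo, Ioo_inter_Ioo, max_eq_left ha,
    min_eq_left hb, Real.volume_real_Ioo]

theorem unitUniform_real_Iio {a : ℝ} (ha : 0 ≤ a) (ha' : a ≤ 1) :
    unitUniform.real (Iio a) = a := by
  rw [measureReal_restrict_apply measurableSet_Iio, Iio_inter_Ioo, min_eq_left ha',
    Real.volume_real_Ioo_of_le ha, sub_zero]

theorem unitUniform_real_Ioi {a : ℝ} (ha : 0 ≤ a) (ha' : a ≤ 1) :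
    unitUniform.real (Ioi a) = 1 - a := by
  rw [measureReal_restrict_apply measurableSet_Ioi, Ioi_inter_Ioo, max_eq_left ha,
    Real.volume_real_Ioo_of_le ha']

theorem integral_unitUniform_eq_intervalIntegral (f : ℝ → ℝ) :
    ∫ v, f v ∂unitUniform = ∫ v in (0 : ℝ)..1, f v := by
  rw [intervalIntegral.integral_of_le zero_le_one, integral_Ioc_eq_integral_Ioo]

theorem integral_unitUniform_max_rpow {a p : ℝ} (ha : a ∈ Icc (0 : ℝ) 1) (hp : 0 ≤ p) :
    ∫ v, max a v ^ p ∂unitUniform = a ^ (p + 1) + (1 - a ^ (p + 1)) / (p + 1) := by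
  have hcont : Continuous fun v : ℝ => max a v ^ p :=
    (continuous_const.max continuous_id).rpow_const fun _ => Or.inr hp
  rw [integral_unitUniform_eq_intervalIntegral,
    ← intervalIntegral.integral_add_adjacent_intervals (b := a) (hcont.intervalIntegrable _ _)
      (hcont.intervalIntegrable _ _)]
  have hlow : EqOn (fun v => max a v ^ p) (fun _ => a ^ p) (uIcc 0 a) := fun v hv => by
    rw [uIcc_of_le ha.1] at hv
    simp only [max_eq_left hv.2]
  have hhigh : EqOn (fun v => max a v ^ p) (fun v => v ^ p) (uIcc a 1) := fun v hv => by
    rw [uIcc_of_le ha.2] at hv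
    simp only [max_eq_right hv.1]
  rw [intervalIntegral.integral_congr hlow, intervalIntegral.integral_congr hhigh,
    intervalIntegral.integral_const, integral_rpow (Or.inl (by linarith)), Real.one_rpow,
    Real.rpow_add' ha.1 (by linarith), Real.rpow_one, smul_eq_mul, sub_zero]
  ring

theorem integral_prhrSymKernel_unitUniform {q w : ℝ} (hq : q ∈ Icc (0 : ℝ) 1)
    (hw : w ∈ Icc (0 : ℝ) 1) :
    ∫ p, prhrSymKernel p.1 p.2 q w ∂(unitUniform.prod unitUniform) = max q w ^ 2 - (q + w) / 2 := by
  have hint : ∀ y₁ y₂ : ℝ,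
      Integrable (fun p : ℝ × ℝ => prhrKernel p.1 p.2 y₁ y₂) (unitUniform.prod unitUniform) ∧
      Integrable (fun p : ℝ × ℝ => prhrKernel p.2 p.1 y₁ y₂) (unitUniform.prod unitUniform) :=
    fun _ _ => ⟨.prhrKernel measurable_fst measurable_snd measurable_const measurable_const,
      .prhrKernel measurable_snd measurable_fst measurable_const measurable_const⟩
  have hswap : ∀ y₁ y₂ : ℝ, ∫ p, prhrKernel p.2 p.1 y₁ y₂ ∂(unitUniform.prod unitUniform) =
      ∫ p, prhrKernel p.1 p.2 y₁ y₂ ∂(unitUniform.prod unitUniform) := fun y₁ y₂ =>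
    integral_prod_swap (fun p : ℝ × ℝ => prhrKernel p.1 p.2 y₁ y₂)
  obtain ⟨h₁, h₂⟩ := hint q w
  obtain ⟨h₃, h₄⟩ := hint w q
  simp only [prhrSymKernel]
  rw [integral_div, integral_add ?_ h₄, integral_add ?_ h₃, integral_add h₁ h₂, hswap, hswap,
    integral_prhrKernel_prod, integral_prhrKernel_prod]
  · rw [max_comm w q, unitUniform_real_Iio hq.1 hq.2, unitUniform_real_Iio hw.1 hw.2,
      unitUniform_real_Ioo hw.1 hq.2, unitUniform_real_Ioo hq.1 hw.2,
      unitUniform_real_Ioi (le_max_of_le_left hq.1) (max_le hq.2 hw.2)]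
    rcases le_total q w with h | h
    · rw [max_eq_right h, max_eq_right (sub_nonpos.2 h), max_eq_left (sub_nonneg.2 h)]
      ring
    · rw [max_eq_left h, max_eq_left (sub_nonneg.2 h), max_eq_right (sub_nonpos.2 h)]
      ring
  · exact h₁.add h₂
  · exact (h₁.add h₂).add h₃

theorem integral_prhrSymKernel_unitUniform_rpow_inv {θ a : ℝ} (hθ : 0 < θ)
    (ha : a ∈ Icc (0 : ℝ) 1) :
    ∫ p, prhrSymKernel p.2.1 p.2.2 (a ^ θ⁻¹) (p.1 ^ θ⁻¹)
        ∂(unitUniform.prod (unitUniform.prod unitUniform)) =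
      (1 / 2) * (θ ^ 2 / ((2 + θ) * (1 + θ)) - a ^ (1 / θ) +
        (4 / (2 + θ)) * a ^ (1 + 2 / θ)) := by
  have hθ' : 0 ≤ θ⁻¹ := inv_nonneg.2 hθ.le
  have hunit : ∀ {x : ℝ}, x ∈ Icc (0 : ℝ) 1 → x ^ θ⁻¹ ∈ Icc (0 : ℝ) 1 := fun hx =>
    ⟨Real.rpow_nonneg hx.1 _, Real.rpow_le_one hx.1 hx.2 hθ'⟩
  have hint : Integrable (fun p : ℝ × ℝ × ℝ => prhrSymKernel p.2.1 p.2.2 (a ^ θ⁻¹) (p.1 ^ θ⁻¹))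
      (unitUniform.prod (unitUniform.prod unitUniform)) :=
    .prhrSymKernel measurable_snd.fst measurable_snd.snd measurable_const
      (measurable_fst.pow_const _)
  have hinner : EqOn (fun v => ∫ u, prhrSymKernel u.1 u.2 (a ^ θ⁻¹) (v ^ θ⁻¹)
      ∂(unitUniform.prod unitUniform))
      (fun v => max a v ^ (2 / θ) - (a ^ θ⁻¹ + v ^ θ⁻¹) / 2) (Ioo 0 1) := fun v hv => by
    have hv' : v ∈ Icc (0 : ℝ) 1 := Ioo_subset_Icc_self hv
    dsimp only
    rw [integral_prhrSymKernel_unitUniform (hunit ha) (hunit hv'),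
      ← Real.rpow_max ha.1 hv'.1 hθ', ← Real.rpow_natCast,
      ← Real.rpow_mul (le_max_of_le_left ha.1)]
    norm_num [div_eq_inv_mul]
  have hcont : Continuous fun v : ℝ => max a v ^ (2 / θ) :=
    (continuous_const.max continuous_id).rpow_const fun _ => Or.inr (by positivity)
  have hcont' : Continuous fun v : ℝ => (a ^ θ⁻¹ + v ^ θ⁻¹) / 2 :=
    (continuous_const.add (Real.continuous_rpow_const hθ')).div_const 2
  rw [integral_prod _ hint, setIntegral_congr_fun measurableSet_Ioo hinner,
    integral_sub (hcont.integrableOn_Icc.mono_set Ioo_subset_Icc_self)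
      (hcont'.integrableOn_Icc.mono_set Ioo_subset_Icc_self),
    integral_unitUniform_max_rpow ha (by positivity), integral_unitUniform_eq_intervalIntegral,
    intervalIntegral.integral_div, intervalIntegral.integral_add intervalIntegrable_const
      ((Real.continuous_rpow_const hθ').intervalIntegrable _ _),
    intervalIntegral.integral_const, integral_rpow (Or.inl (by linarith)), Real.one_rpow,
    Real.zero_rpow (by positivity), one_div θ, add_comm 1 (2 / θ)]
  field_simp
  ring

theorem Monotone.exists_preimage_Iic_eq_Iic {f : ℝ → ℝ} (hmono : Monotone f)
    (hcont : Continuous f) {u : ℝ} (hle : ∃ x, f x ≤ u) (hlt : ∃ x, u < f x) :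
    ∃ x₀, f ⁻¹' Iic u = Iic x₀ ∧ f x₀ = u := by
  obtain ⟨b, hb⟩ := hlt
  have hbdd : BddAbove (f ⁻¹' Iic u) :=
    ⟨b, fun x hx => le_of_lt (hmono.reflect_lt (lt_of_le_of_lt hx hb))⟩
  have hmem := (isClosed_Iic.preimage hcont).csSup_mem hle hbdd
  refine ⟨sSup (f ⁻¹' Iic u), ?_, le_antisymm hmem ?_⟩
  · ext x
    exact ⟨fun hx => le_csSup hbdd hx, fun hx => (hmono hx).trans hmem⟩
  · refine _root_.ge_of_tendsto (hcont.continuousAt.tendsto.mono_left nhdsWithin_le_nhds)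
      (eventually_nhdsWithin_of_forall (s := Ioi (sSup (f ⁻¹' Iic u))) fun x hx => ?_)
    by_contra h
    exact (not_le.2 hx) (le_csSup hbdd (le_of_not_ge h))

theorem map_cdf_eq_unitUniform (μ : Measure ℝ) [IsProbabilityMeasure μ]
    (hcont : Continuous (cdf μ)) : μ.map (cdf μ) = unitUniform := by
  refine Measure.ext_of_Iic _ _ fun u => ?_
  rw [Measure.map_apply (cdf μ).mono.measurable measurableSet_Iic,
    Measure.restrict_apply measurableSet_Iic]
  rcases lt_or_ge u 1 with hu1 | hu1
  · by_cases hle : ∃ x, cdf μ x ≤ u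
    · obtain ⟨b, hb⟩ := ((tendsto_cdf_atTop μ).eventually (lt_mem_nhds hu1)).exists
      obtain ⟨x₀, hpre, hx₀⟩ := (monotone_cdf μ).exists_preimage_Iic_eq_Iic hcont hle ⟨b, hb⟩
      have hIoc : Iic u ∩ Ioo 0 1 = Ioc 0 u := by
        ext x
        simp only [mem_inter_iff, mem_Iic, mem_Ioo, mem_Ioc]
        exact ⟨fun h => ⟨h.2.1, h.1⟩, fun h => ⟨h.2, h.1, h.2.trans_lt hu1⟩⟩
      rw [hpre, ← ofReal_cdf, hx₀, hIoc, Real.volume_Ioc, sub_zero]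
    · push Not at hle
      have hu0 : u ≤ 0 := ge_of_tendsto' (tendsto_cdf_atBot μ) fun x => (hle x).le
      have hpre : cdf μ ⁻¹' Iic u = ∅ := eq_empty_of_forall_notMem fun x hx => (hle x).not_ge hx
      have hempty : Iic u ∩ Ioo 0 1 = ∅ := eq_empty_of_forall_notMem fun x hx => by
        linarith [mem_Iic.1 hx.1, hx.2.1]
      rw [hpre, hempty, measure_empty, measure_empty]
  · have hpre : cdf μ ⁻¹' Iic u = univ := eq_univ_of_forall fun x => (cdf_le_one μ x).trans hu1
    rw [hpre, measure_univ, inter_eq_right.2 fun x hx => (mem_Iic.2 (hx.2.le.trans hu1)),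
      Real.volume_Ioo]
    norm_num

section Laws

variable {Ω : Type*} [MeasurableSpace Ω] {μ : Measure Ω} [IsProbabilityMeasure μ]

theorem map_comp_eq_unitUniform {Z : Ω → ℝ} (hZ : Measurable Z) {F : ℝ → ℝ}
    (hF : Continuous F) (hcdf : ∀ x, (μ {ω | Z ω ≤ x}).toReal = F x) :
    μ.map (F ∘ Z) = unitUniform := by
  have := Measure.isProbabilityMeasure_map (μ := μ) hZ.aemeasurable
  have hF' : ⇑(cdf (μ.map Z)) = F := funext fun x => by
    rw [cdf_eq_real, map_measureReal_apply hZ measurableSet_Iic]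
    exact hcdf x
  rw [← Measure.map_map hF.measurable hZ, ← hF']
  exact map_cdf_eq_unitUniform _ (hF' ▸ hF)

theorem map_prodMk_prodMk_eq_prod_of_iIndepFun {β γ : Type*} [MeasurableSpace β]
    [MeasurableSpace γ] {X₁ X₂ X₃ : Ω → β} (hindep : iIndepFun ![X₁, X₂, X₃] μ)
    (h₁ : Measurable X₁) (h₂ : Measurable X₂) (h₃ : Measurable X₃) {g₁ g₂ g₃ : β → γ}
    (hg₁ : Measurable g₁) (hg₂ : Measurable g₂) (hg₃ : Measurable g₃) :
    μ.map (fun ω => (g₃ (X₃ ω), (g₁ (X₁ ω), g₂ (X₂ ω)))) =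
      (μ.map (g₃ ∘ X₃)).prod ((μ.map (g₁ ∘ X₁)).prod (μ.map (g₂ ∘ X₂))) := by
  have hm : ∀ i, Measurable (![X₁, X₂, X₃] i) := fun i => by fin_cases i <;> assumption
  have h12 : IndepFun X₁ X₂ μ := by simpa using hindep.indepFun (show (0 : Fin 3) ≠ 1 by decide)
  have h3 : IndepFun X₃ (fun ω => (X₁ ω, X₂ ω)) μ := by
    simpa using (hindep.indepFun_prodMk hm 0 1 2 (by decide) (by decide)).symm
  rw [← (indepFun_iff_map_prod_eq_prod_map_map (hg₁.comp h₁).aemeasurable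
    (hg₂.comp h₂).aemeasurable).1 (h12.comp hg₁ hg₂)]
  exact (indepFun_iff_map_prod_eq_prod_map_map (hg₃.comp h₃).aemeasurable
    ((hg₁.comp h₁).prodMk (hg₂.comp h₂)).aemeasurable).1 (h3.comp hg₃ (hg₁.prodMap hg₂))

end Laws

/-- under the PRHR null hypothesis `F = F₀^θ` (with `F₀` continuous and
strictly increasing on `[0,∞)`), for independent `X₁, X₂ ~ F₀` and `Y₂ ~ F` and any
`y` with `0 < F y < 1`,
`E[φ(X₁, X₂, y, Y₂)] = (1/2)[θ²/((2+θ)(1+θ)) − F(y)^{1/θ} + (4/(2+θ)) F(y)^{1+2/θ}]`. -/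
theorem symKernel_conditional_expectation
    {Ω : Type*} [MeasureSpace Ω] [IsProbabilityMeasure (ℙ : Measure Ω)]
    (θ : ℝ) (hθ : 0 < θ)
    (X₁ X₂ Y₂ : Ω → ℝ) (F₀ : ℝ → ℝ)
    (hX₁m : Measurable X₁) (hX₂m : Measurable X₂) (hY₂m : Measurable Y₂)
    (hF₀cont : Continuous F₀) (hF₀mono : StrictMonoOn F₀ (Set.Ici (0 : ℝ)))
    (hX₁nn : ∀ ω, 0 ≤ X₁ ω) (hX₂nn : ∀ ω, 0 ≤ X₂ ω) (hY₂nn : ∀ ω, 0 ≤ Y₂ ω)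
    (hindep : iIndepFun ![X₁, X₂, Y₂] ℙ)
    (hX₁cdf : ∀ x, (ℙ {ω | X₁ ω ≤ x}).toReal = F₀ x)
    (hX₂cdf : ∀ x, (ℙ {ω | X₂ ω ≤ x}).toReal = F₀ x)
    (hY₂cdf : ∀ x, (ℙ {ω | Y₂ ω ≤ x}).toReal = F₀ x ^ θ)
    (y : ℝ) (hy0 : 0 < F₀ y ^ θ) (hy1 : F₀ y ^ θ < 1) :
    ∫ ω, prhrSymKernel (X₁ ω) (X₂ ω) y (Y₂ ω) ∂ℙ =
      (1 / 2) * (θ ^ 2 / ((2 + θ) * (1 + θ)) - (F₀ y ^ θ) ^ (1 / θ) +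
        (4 / (2 + θ)) * (F₀ y ^ θ) ^ (1 + 2 / θ)) := by
  have hF₀nn : ∀ x, 0 ≤ F₀ x := fun x => hX₁cdf x ▸ ENNReal.toReal_nonneg
  have hy : 0 ≤ y := by
    by_contra! hy
    have hempty : {ω | X₁ ω ≤ y} = ∅ :=
      eq_empty_of_forall_notMem fun ω hω => hy.not_ge ((hX₁nn ω).trans hω)
    rw [← hX₁cdf, hempty, measure_empty, ENNReal.toReal_zero, Real.zero_rpow hθ.ne'] at hy0
    exact lt_irrefl _ hy0
  have hF : Continuous fun x => F₀ x ^ θ := hF₀cont.rpow_const fun _ => Or.inr hθ.le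
  have hlaw := map_prodMk_prodMk_eq_prod_of_iIndepFun hindep hX₁m hX₂m hY₂m
    hF₀cont.measurable hF₀cont.measurable hF.measurable
  rw [map_comp_eq_unitUniform hX₁m hF₀cont hX₁cdf, map_comp_eq_unitUniform hX₂m hF₀cont hX₂cdf,
    map_comp_eq_unitUniform hY₂m hF hY₂cdf] at hlaw
  set g : ℝ × ℝ × ℝ → ℝ := fun p => prhrSymKernel p.2.1 p.2.2 ((F₀ y ^ θ) ^ θ⁻¹) (p.1 ^ θ⁻¹)
  have hg : Measurable g :=
    .prhrSymKernel measurable_snd.fst measurable_snd.snd measurable_const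
      (measurable_fst.pow_const _)
  have hkernel : ∀ ω, prhrSymKernel (X₁ ω) (X₂ ω) y (Y₂ ω) =
      g (F₀ (Y₂ ω) ^ θ, (F₀ (X₁ ω), F₀ (X₂ ω))) := fun ω => by
    simp only [g, Real.rpow_rpow_inv (hF₀nn _) hθ.ne']
    exact (prhrSymKernel_comp_of_strictMonoOn hF₀mono (hX₁nn ω) (hX₂nn ω) hy (hY₂nn ω)).symm
  calc ∫ ω, prhrSymKernel (X₁ ω) (X₂ ω) y (Y₂ ω) ∂ℙ
      = ∫ ω, g (F₀ (Y₂ ω) ^ θ, (F₀ (X₁ ω), F₀ (X₂ ω))) ∂ℙ :=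
        integral_congr_ae (.of_forall hkernel)
    _ = ∫ p, g p ∂(unitUniform.prod (unitUniform.prod unitUniform)) := by
      rw [← hlaw, integral_map _ hg.aestronglyMeasurable]
      exact ((hF.measurable.comp hY₂m).prodMk ((hF₀cont.measurable.comp hX₁m).prodMk
        (hF₀cont.measurable.comp hX₂m))).aemeasurable
    _ = _ := integral_prhrSymKernel_unitUniform_rpow_inv hθ ⟨hy0.le, hy1.le⟩
end

section
/- For every θ > 0, the integral identity ∫₀¹ ( (1/2)[θ²/((2+θ)(1+θ)) − u^{1/θ} + (4/(2+θ))·u^{1+2/θ}] )² du = (θ/(4(2+θ)))·[1 − 8/(3+2θ) + 16/((4+3θ)(2+θ)) − θ³/((2+θ)(θ+1)²)] holds; that is, σ₀₁²(θ), the variance of the conditional expectation of the symmetrized kernel given Y₁ under the PRHR null hypothesis, has the stated closed form. -/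
/-! Expanding the square leaves six terms `c * u ^ r` with `r > -1`, each integrating to
`c / (r + 1)` over `[0, 1]`; the closed form is then an identity between rational functions of `θ`. -/

open intervalIntegral Real

theorem integral_mul_rpow_zero_one (c r : ℝ) (hr : -1 < r) :
    ∫ u in (0 : ℝ)..1, c * u ^ r = c / (r + 1) := by
  rw [integral_const_mul, integral_rpow (Or.inl hr), one_rpow, zero_rpow (by linarith)]
  ring

theorem sq_const_add_rpow_add_rpow {u : ℝ} (hu : 0 < u) (a b c p q : ℝ) :
    (a + b * u ^ p + c * u ^ q) ^ 2 =
      a ^ 2 + 2 * a * b * u ^ p + 2 * a * c * u ^ q + b ^ 2 * u ^ (2 * p) +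
        2 * b * c * u ^ (p + q) + c ^ 2 * u ^ (2 * q) := by
  rw [two_mul p, two_mul q, rpow_add hu, rpow_add hu, rpow_add hu]
  ring

theorem integral_sq_const_add_rpow_add_rpow (a b c : ℝ) {p q : ℝ} (hp : -1 / 2 < p)
    (hq : -1 / 2 < q) :
    ∫ u in (0 : ℝ)..1, (a + b * u ^ p + c * u ^ q) ^ 2 =
      a ^ 2 + 2 * a * b / (p + 1) + 2 * a * c / (q + 1) + b ^ 2 / (2 * p + 1) +
        2 * b * c / (p + q + 1) + c ^ 2 / (2 * q + 1) := by
  have iTerm {r : ℝ} (hr : -1 < r) (d : ℝ) :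
      IntervalIntegrable (fun u : ℝ => d * u ^ r) MeasureTheory.volume 0 1 :=
    (intervalIntegrable_rpow' hr).const_mul d
  have iP := iTerm (by linarith : -1 < p) (2 * a * b)
  have iQ := iTerm (by linarith : -1 < q) (2 * a * c)
  have i2P := iTerm (by linarith : -1 < 2 * p) (b ^ 2)
  have iPQ := iTerm (by linarith : -1 < p + q) (2 * b * c)
  have i2Q := iTerm (by linarith : -1 < 2 * q) (c ^ 2)
  have iConst : IntervalIntegrable (fun _ : ℝ => a ^ 2) MeasureTheory.volume 0 1 :=
    intervalIntegrable_const
  rw [integral_congr_ae (Filter.Eventually.of_forall fun u hu =>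
      sq_const_add_rpow_add_rpow (Set.uIoc_of_le (zero_le_one (α := ℝ)) ▸ hu).1 a b c p q),
    integral_add ((((iConst.add iP).add iQ).add i2P).add iPQ) i2Q,
    integral_add (((iConst.add iP).add iQ).add i2P) iPQ, integral_add ((iConst.add iP).add iQ) i2P,
    integral_add (iConst.add iP) iQ, integral_add iConst iP, integral_const,
    integral_mul_rpow_zero_one _ _ (by linarith), integral_mul_rpow_zero_one _ _ (by linarith),
    integral_mul_rpow_zero_one _ _ (by linarith), integral_mul_rpow_zero_one _ _ (by linarith),
    integral_mul_rpow_zero_one _ _ (by linarith)]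
  simp only [sub_zero, one_smul]

/-- the closed form of `σ₀₁²(θ)`, the variance of the conditional
expectation of the symmetrized kernel given `Y₁` under the PRHR null hypothesis:
`∫₀¹ ((1/2)[θ²/((2+θ)(1+θ)) − u^{1/θ} + (4/(2+θ)) u^{1+2/θ}])² du
  = (θ/(4(2+θ)))[1 − 8/(3+2θ) + 16/((4+3θ)(2+θ)) − θ³/((2+θ)(θ+1)²)]`. -/
theorem sigma01_closed_form (θ : ℝ) (hθ : 0 < θ) :
    ∫ u in (0 : ℝ)..1,
        ((1 / 2) * (θ ^ 2 / ((2 + θ) * (1 + θ)) - u ^ (1 / θ) +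
          (4 / (2 + θ)) * u ^ (1 + 2 / θ))) ^ 2 =
      (θ / (4 * (2 + θ))) * (1 - 8 / (3 + 2 * θ) + 16 / ((4 + 3 * θ) * (2 + θ)) -
        θ ^ 3 / ((2 + θ) * (θ + 1) ^ 2)) := by
  have hp : -1 / 2 < 1 / θ := by have := one_div_pos.2 hθ; linarith
  have hq : -1 / 2 < 1 + 2 / θ := by have := div_pos two_pos hθ; linarith
  convert integral_sq_const_add_rpow_add_rpow (θ ^ 2 / ((2 + θ) * (1 + θ)) / 2) (-1 / 2)
    (2 / (2 + θ)) hp hq using 1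
  · congr 1 with u
    ring
  · field_simp
    ring
end
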